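/- For any probability distribution γ over a finite action space Y = {-1, 1} (the distribution of the outcome y), there exists a distribution p over a finite hypothesis class H (namely, the point mass on a risk-minimizing hypothesis) such that for every hypothesis h ∈ H and every group indicator g : X → {0,1} and every fixed context x, the expected instantaneous group regret E_{h'∼p, y∼Ber(γ)}[g(x)(ℓ(h'(x), y) − ℓ(h(x), y))] is at most 0. Consequently, the adversary-moves-first value v = max_{γ∈[0,1]} min_{p∈Δ(H)} max_{(h,g)∈H×G} E_{h'∼p, y∼Ber(γ)}[g(x)(ℓ(h'(x), y) − ℓ(h(x), y))] is nonpositive. -/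
import Mathlib


open Finset

/-- For every Bernoulli parameter `γ` of the outcome distribution, there is a distribution
`p` over the finite hypothesis class `H` such that for every `h ∈ H`, every group indicator
`g` and the fixed context `x`, the expected instantaneous group regret is at most `0`. -/
theorem stmt0 {X : Type*} (H : Finset (X → ℤ)) (hH : H.Nonempty)
    (hHrange : ∀ h ∈ H, ∀ x, h x ∈ ({-1, 1} : Set ℤ))
    (ℓ : ℤ → ℤ → ℝ) (hℓ : ∀ y' y, ℓ y' y ∈ Set.Icc (0 : ℝ) 1)
    (x : X) (γ : ℝ) (hγ : γ ∈ Set.Icc (0 : ℝ) 1) :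
    ∃ p : (X → ℤ) → ℝ, (∀ h, 0 ≤ p h) ∧ (∑ h ∈ H, p h) = 1 ∧
      ∀ h ∈ H, ∀ g : X → ℝ, g x ∈ ({0, 1} : Set ℝ) →
        (∑ h' ∈ H, p h' *
          (g x * (γ * (ℓ (h' x) 1 - ℓ (h x) 1)
            + (1 - γ) * (ℓ (h' x) (-1) - ℓ (h x) (-1))))) ≤ 0 := by
  classical
  obtain ⟨h₀, hh₀, hmin⟩ := H.exists_min_image
    (fun h => γ * ℓ (h x) 1 + (1 - γ) * ℓ (h x) (-1)) hH
  refine ⟨fun h => if h = h₀ then 1 else 0, ?_, ?_, ?_⟩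
  · intro h; by_cases hc : h = h₀ <;> simp [hc]
  · simp [Finset.sum_ite_eq', hh₀]
  · intro h hh g hg
    have hsum : (∑ h' ∈ H, (if h' = h₀ then (1:ℝ) else 0) *
          (g x * (γ * (ℓ (h' x) 1 - ℓ (h x) 1)
            + (1 - γ) * (ℓ (h' x) (-1) - ℓ (h x) (-1)))))
        = g x * (γ * (ℓ (h₀ x) 1 - ℓ (h x) 1)
            + (1 - γ) * (ℓ (h₀ x) (-1) - ℓ (h x) (-1))) := by
      rw [Finset.sum_eq_single h₀]
      · simp
      · intro b _ hb; simp [hb]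
      · intro hn; exact absurd hh₀ hn
    rw [hsum]
    have hg0 : (0:ℝ) ≤ g x := by simp only [Set.mem_insert_iff, Set.mem_singleton_iff] at hg; rcases hg with h | h <;> simp [h]
    have := hmin h hh
    have hle : γ * (ℓ (h₀ x) 1 - ℓ (h x) 1)
        + (1 - γ) * (ℓ (h₀ x) (-1) - ℓ (h x) (-1)) ≤ 0 := by nlinarith
    exact mul_nonpos_of_nonneg_of_nonpos hg0 hle
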